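/- arXiv:2403.17563 — 2 statements merged into one kernel-verified Lean document; each statement's English description precedes it below -/
import Mathlib

section
/- Let β₁, β₂ > 0 be real numbers satisfying ν₀(β₁ + β₂ν₁) ≥ e − 1, where ν₀ = √(1 − sin²1) and ν₁ = −sin 2/(1 + cos 2). Let p be analytic on the open unit disk 𝔻 with p(0) = 1, and suppose that for every z ∈ 𝔻 the value 1 + β₁·z·p′(z) + β₂·z²·p″(z) lies in the set {w ∈ ℂ : w ≠ 0, |log w| < 1} (principal branch of the complex logarithm). Then for every z ∈ 𝔻, p(z) ∈ {1 + sin w : w ∈ 𝔻}, i.e. p(z) ≺ 1 + sin z. -/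
/-!
Write `q = p'`. The hypothesis says that `w (β₁ q(w) + β₂ w q'(w)) = exp L(w) - 1` with `‖L‖ < 1`,
so this function maps `𝔻` into the ball of radius `e - 1`, and the Schwarz lemma gives
`‖β₁ q + β₂ w q'‖ ≤ e - 1` on `𝔻`. Along each ray, `t ↦ t^(β₁/β₂) q(t z)` has derivative
`t^(β₁/β₂ - 1) (β₁ q + β₂ w q')(t z) / β₂`, and integrating from `0` to `1` yields
`‖q‖ ≤ (e - 1)/β₁`, which is smaller than `ν₀ = cos 1` because `ν₁ < 0`.
Hence `‖p(z) - 1‖ < cos 1 < 2/π`. Finally `‖sin w‖ ≥ 2/π` on the unit circle, and since `sin`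
is an open map, the image of `𝔻` contains the whole disk of radius `2/π`.
-/

open Metric

noncomputable def nu0 : ℝ := Real.sqrt (1 - Real.sin 1 ^ 2)

noncomputable def nu1 : ℝ := -Real.sin 2 / (1 + Real.cos 2)

open Set Filter Topology
open scoped Real

theorem Complex.norm_sub_one_lt_of_norm_log_lt {ζ : ℂ} (hζ : ζ ≠ 0) {r : ℝ}
    (h : ‖Complex.log ζ‖ < r) : ‖ζ - 1‖ < Real.exp r - 1 := by
  have hexp := Complex.norm_exp_sub_sum_le_exp_norm_sub_sum (Complex.log ζ) 1
  simp only [Finset.range_one, Finset.sum_singleton, pow_zero, Nat.factorial_zero,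
    Nat.cast_one, div_one, Complex.exp_log hζ] at hexp
  linarith [Real.exp_lt_exp.2 h]

theorem norm_le_div_of_mapsTo_ball_mul {h : ℂ → ℂ} {r R : ℝ}
    (hd : DifferentiableOn ℂ h (ball 0 r))
    (hmaps : MapsTo (fun w => w * h w) (ball 0 r) (closedBall 0 R)) {w : ℂ}
    (hw : w ∈ ball 0 r) : ‖h w‖ ≤ R / r := by
  have hdm : DifferentiableOn ℂ (fun w => w * h w) (ball 0 r) := differentiableOn_id.mul hd
  have hslope : dslope (fun w => w * h w) 0 w = h w := by
    rcases eq_or_ne w 0 with rfl | hw0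
    · rw [dslope_same]
      have h0 : (0 : ℂ) ∈ ball 0 r := hw
      have hder : HasDerivAt (fun w => w * h w) (1 * h 0 + 0 * deriv h 0) 0 :=
        (hasDerivAt_id' 0).mul (hd.differentiableAt (isOpen_ball.mem_nhds h0)).hasDerivAt
      simpa using hder.deriv
    · simpa using dslope_sub_smul_of_ne h hw0
  rw [← hslope]
  exact Complex.norm_dslope_le_div_of_mapsTo_ball hdm (by simpa using hmaps) hw

theorem norm_add_mul_deriv_le_of_norm_log_lt {q : ℂ → ℂ} (hq : DifferentiableOn ℂ q (ball 0 1))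
    (hq' : DifferentiableOn ℂ (deriv q) (ball 0 1)) {a b : ℂ} {R : ℝ}
    (hlog : ∀ w ∈ ball (0 : ℂ) 1, 1 + a * w * q w + b * w ^ 2 * deriv q w ≠ 0 ∧
      ‖Complex.log (1 + a * w * q w + b * w ^ 2 * deriv q w)‖ < R) :
    ∀ w ∈ ball (0 : ℂ) 1, ‖a * q w + b * w * deriv q w‖ ≤ Real.exp R - 1 := by
  intro w hw
  rw [← div_one (Real.exp R - 1)]
  refine norm_le_div_of_mapsTo_ball_mul (h := fun w => a * q w + b * w * deriv q w)
    ((hq.const_mul _).add ((differentiableOn_id.const_mul _).mul hq')) ?_ hw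
  intro v hv
  obtain ⟨hne, hlt⟩ := hlog v hv
  have hid : v * (a * q v + b * v * deriv q v) = (1 + a * v * q v + b * v ^ 2 * deriv q v) - 1 := by
    ring
  simp only [mem_closedBall_zero_iff, hid]
  exact (Complex.norm_sub_one_lt_of_norm_log_lt hne hlt).le

theorem ball_subset_image_ball_of_isOpen_image {E F : Type*} [MetricSpace E] [ProperSpace E]
    [NormedAddCommGroup F] [NormedSpace ℝ F] {f : E → F} {z₀ : E} {r ε : ℝ} (hr : 0 < r)
    (hf : ContinuousOn f (closedBall z₀ r)) (hopen : IsOpen (f '' ball z₀ r))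
    (hsphere : ∀ z ∈ sphere z₀ r, ε ≤ ‖f z - f z₀‖) :
    ball (f z₀) ε ⊆ f '' ball z₀ r := by
  rcases le_or_gt ε 0 with hε | hε
  · simp [ball_eq_empty.2 hε]
  refine (convex_ball (f z₀) ε).isPreconnected.subset_of_closure_inter_subset hopen
    ⟨f z₀, mem_ball_self hε, z₀, mem_ball_self hr, rfl⟩ ?_
  rintro v ⟨hv, hvε⟩
  have hclosed : IsClosed (f '' closedBall z₀ r) :=
    ((isCompact_closedBall z₀ r).image_of_continuousOn hf).isClosed
  obtain ⟨z, hz, rfl⟩ := closure_minimal (image_mono ball_subset_closedBall) hclosed hv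
  refine ⟨z, ?_, rfl⟩
  by_contra hzb
  have hzs : z ∈ sphere z₀ r :=
    le_antisymm (mem_closedBall.1 hz) (not_lt.1 fun h => hzb (mem_ball.2 h))
  exact (hsphere z hzs).not_gt (by simpa [dist_eq_norm] using hvε)

theorem Complex.mul_norm_le_norm_sin {w : ℂ} (hw : ‖w‖ ≤ π / 2) :
    2 / π * ‖w‖ ≤ ‖Complex.sin w‖ := by
  have hsin : 2 / π * |w.re| ≤ |Real.sin w.re| :=
    Real.mul_abs_le_abs_sin ((Complex.abs_re_le_norm w).trans hw)
  have hsinh : |w.im| ≤ |Real.sinh w.im| := by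
    rw [Real.abs_sinh]; exact Real.self_le_sinh_iff.2 (abs_nonneg _)
  have hcoef : 2 / π ≤ 1 := (div_le_one Real.pi_pos).2 (by linarith [Real.pi_gt_three])
  have hsq : ‖Complex.sin w‖ ^ 2 = Real.sin w.re ^ 2 + Real.sinh w.im ^ 2 := by
    rw [Complex.sq_norm, Complex.sin_eq, Complex.normSq_apply]
    simp only [Complex.add_re, Complex.add_im, Complex.mul_re, Complex.mul_im, Complex.I_re,
      Complex.I_im, Complex.sin_ofReal_re, Complex.cos_ofReal_re, Complex.sinh_ofReal_re,
      Complex.cosh_ofReal_re, Complex.sin_ofReal_im, Complex.cos_ofReal_im,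
      Complex.sinh_ofReal_im, Complex.cosh_ofReal_im]
    linear_combination (Real.sin w.re ^ 2) * Real.cosh_sq w.im
      + Real.sinh w.im ^ 2 * Real.sin_sq_add_cos_sq w.re
  have hw2 : ‖w‖ ^ 2 = w.re ^ 2 + w.im ^ 2 := by rw [Complex.sq_norm, Complex.normSq_apply]; ring
  have hre : (2 / π) ^ 2 * w.re ^ 2 ≤ Real.sin w.re ^ 2 := by
    simpa only [mul_pow, sq_abs] using pow_le_pow_left₀ (by positivity) hsin 2
  have him : w.im ^ 2 ≤ Real.sinh w.im ^ 2 := by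
    simpa only [sq_abs] using pow_le_pow_left₀ (abs_nonneg _) hsinh 2
  have hcoef2 : (2 / π) ^ 2 ≤ 1 := pow_le_one₀ (by positivity) hcoef
  rw [← pow_le_pow_iff_left₀ (by positivity) (norm_nonneg _) two_ne_zero, mul_pow, hsq, hw2]
  nlinarith [sq_nonneg w.im]

theorem Complex.ball_subset_sin_image_ball : ball (0 : ℂ) (2 / π) ⊆ Complex.sin '' ball 0 1 := by
  have hopen : IsOpenMap Complex.sin := by
    refine (Complex.analyticOnNhd_sin (s := univ)).is_constant_or_isOpenMap.resolve_left ?_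
    rintro ⟨c, hc⟩
    have h : Complex.sin 0 = Complex.sin ((π / 2 : ℝ) : ℂ) := (hc _).trans (hc _).symm
    rw [← Complex.ofReal_sin, Real.sin_pi_div_two, Complex.sin_zero] at h
    norm_num at h
  have hsphere : ∀ z ∈ sphere (0 : ℂ) 1, 2 / π ≤ ‖Complex.sin z - Complex.sin 0‖ := by
    intro z hz
    rw [mem_sphere_zero_iff_norm] at hz
    simpa [hz] using Complex.mul_norm_le_norm_sin (w := z) (by linarith [Real.pi_gt_three])
  simpa using ball_subset_image_ball_of_isOpen_image one_pos
    Complex.continuous_sin.continuousOn (hopen _ isOpen_ball) hsphere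

theorem hasDerivAt_rpow_mul_comp_mul {q : ℂ → ℂ} {z : ℂ} {α t : ℝ} (ht : 0 < t)
    (hq : DifferentiableAt ℂ q (t * z)) :
    HasDerivAt (fun s : ℝ => ((s ^ α : ℝ) : ℂ) * q (s * z))
      (((t ^ (α - 1) : ℝ) : ℂ) * (α * q (t * z) + t * z * deriv q (t * z))) t := by
  have hpow : HasDerivAt (fun s : ℝ => ((s ^ α : ℝ) : ℂ)) ((α * t ^ (α - 1) : ℝ) : ℂ) t :=
    (Real.hasDerivAt_rpow_const (Or.inl ht.ne')).ofReal_comp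
  have hlin : HasDerivAt (fun w : ℂ => w * z) z (t : ℂ) := by
    simpa using (hasDerivAt_id' (t : ℂ)).mul_const z
  have hcomp : HasDerivAt (fun s : ℝ => q (s * z)) (deriv q (t * z) * z) t :=
    (hq.hasDerivAt.comp (t : ℂ) hlin).comp_ofReal
  have hprod : HasDerivAt (fun s : ℝ => ((s ^ α : ℝ) : ℂ) * q (s * z))
      (((α * t ^ (α - 1) : ℝ) : ℂ) * q (t * z) + ((t ^ α : ℝ) : ℂ) * (deriv q (t * z) * z)) t :=
    hpow.mul hcomp
  convert hprod using 1
  have htα : t ^ α = t ^ (α - 1) * t := by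
    rw [Real.rpow_sub_one ht.ne', div_mul_cancel₀ _ ht.ne']
  push_cast [htα]
  ring

theorem norm_sub_le_div_of_norm_deriv_le_rpow {E : Type*} [NormedAddCommGroup E]
    [NormedSpace ℝ E] {u u' : ℝ → E} {α C : ℝ} (hα : 0 < α)
    (hu0 : ContinuousWithinAt u (Ioi 0) 0) (hu : ∀ t ∈ Ioc (0 : ℝ) 1, HasDerivAt u (u' t) t)
    (hu' : ∀ t ∈ Ioc (0 : ℝ) 1, ‖u' t‖ ≤ C * t ^ (α - 1)) :
    ‖u 1 - u 0‖ ≤ C / α := by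
  have hstep : ∀ ε ∈ Ioo (0 : ℝ) 1, ‖u 1 - u ε‖ ≤ C / α * (1 - ε ^ α) := by
    intro ε hε
    have hIoc : ∀ t ∈ Icc ε 1, t ∈ Ioc (0 : ℝ) 1 := fun t ht => ⟨hε.1.trans_le ht.1, ht.2⟩
    have hB' : ∀ t ∈ Icc ε 1, HasDerivAt (fun t => C / α * (t ^ α - ε ^ α))
        (C * t ^ (α - 1)) t := fun t ht => by
      have h := ((Real.hasDerivAt_rpow_const (p := α) (Or.inl (hIoc t ht).1.ne')).sub_const
        (ε ^ α)).const_mul (C / α)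
      rwa [← mul_assoc, div_mul_cancel₀ _ hα.ne'] at h
    simpa using image_norm_le_of_norm_deriv_right_le_deriv_boundary'
      (f := fun t => u t - u ε) (B := fun t => C / α * (t ^ α - ε ^ α))
      (fun t ht => ((hu t (hIoc t ht)).sub_const _).continuousAt.continuousWithinAt)
      (fun t ht => ((hu t (hIoc t (Ico_subset_Icc_self ht))).sub_const _).hasDerivWithinAt)
      (by simp) (fun t ht => (hB' t ht).continuousAt.continuousWithinAt)
      (fun t ht => (hB' t (Ico_subset_Icc_self ht)).hasDerivWithinAt)
      (fun t ht => hu' t (hIoc t (Ico_subset_Icc_self ht))) (right_mem_Icc.2 hε.2.le)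
  have hpow : Tendsto (fun ε : ℝ => C / α * (1 - ε ^ α)) (𝓝[>] 0) (𝓝 (C / α)) := by
    have h := ((Real.continuousAt_rpow_const 0 α (Or.inr hα.le)).tendsto.const_sub 1).const_mul
      (C / α)
    simpa [Real.zero_rpow hα.ne'] using h.mono_left nhdsWithin_le_nhds
  exact le_of_tendsto_of_tendsto ((tendsto_const_nhds.sub hu0).norm) hpow
    (by filter_upwards [Ioo_mem_nhdsGT one_pos] with ε hε using hstep ε hε)

theorem norm_le_div_of_norm_add_mul_deriv_le {s : Set ℂ} (hs : StarConvex ℝ 0 s) {q : ℂ → ℂ}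
    (hq : ∀ w ∈ s, DifferentiableAt ℂ q w) {a b M : ℝ} (ha : 0 < a) (hb : 0 < b)
    (hM : ∀ w ∈ s, ‖a * q w + b * w * deriv q w‖ ≤ M) {z : ℂ} (hz : z ∈ s) :
    ‖q z‖ ≤ M / a := by
  have hα : 0 < a / b := div_pos ha hb
  have hmem : ∀ t ∈ Icc (0 : ℝ) 1, (t : ℂ) * z ∈ s := fun t ht => by
    simpa [Complex.real_smul] using hs.smul_mem hz ht.1 ht.2
  have hu0 : ContinuousWithinAt (fun t : ℝ => ((t ^ (a / b) : ℝ) : ℂ) * q (t * z)) (Ioi 0) 0 := by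
    refine ((Complex.continuous_ofReal.continuousAt.comp
      (Real.continuousAt_rpow_const 0 _ (Or.inr hα.le))).mul ?_).continuousWithinAt
    refine ContinuousAt.comp (g := q) ?_ (by fun_prop)
    simpa using (hq _ (hmem 0 (left_mem_Icc.2 zero_le_one))).continuousAt
  have hu' : ∀ t ∈ Ioc (0 : ℝ) 1, ‖((t ^ (a / b - 1) : ℝ) : ℂ) *
      (((a / b : ℝ) : ℂ) * q (t * z) + t * z * deriv q (t * z))‖ ≤ M / b * t ^ (a / b - 1) := by
    intro t ht
    have hid : ((a / b : ℝ) : ℂ) * q (t * z) + t * z * deriv q (t * z) =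
        (a * q (t * z) + b * (t * z) * deriv q (t * z)) / b := by
      have hb' : (b : ℂ) ≠ 0 := Complex.ofReal_ne_zero.2 hb.ne'
      push_cast
      field_simp
    rw [hid, norm_mul, norm_div, Complex.norm_real, Complex.norm_real,
      Real.norm_of_nonneg (Real.rpow_nonneg ht.1.le _), Real.norm_of_nonneg hb.le, mul_comm]
    exact mul_le_mul_of_nonneg_right (div_le_div_of_nonneg_right
      (hM _ (hmem t (Ioc_subset_Icc_self ht))) hb.le) (Real.rpow_nonneg ht.1.le _)
  have h := norm_sub_le_div_of_norm_deriv_le_rpow hα hu0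
    (fun t ht => hasDerivAt_rpow_mul_comp_mul ht.1 (hq _ (hmem t (Ioc_subset_Icc_self ht)))) hu'
  simpa [div_div_div_cancel_right₀ hb.ne', Real.zero_rpow hα.ne'] using h

theorem nu0_eq_cos_one : nu0 = Real.cos 1 := by
  rw [nu0, ← Real.cos_sq', Real.sqrt_sq Real.cos_one_pos.le]

theorem nu1_neg : nu1 < 0 := by
  have hsin : 0 < Real.sin 2 :=
    Real.sin_pos_of_pos_of_lt_pi two_pos (by linarith [Real.pi_gt_three])
  have hcos : 0 < 1 + Real.cos 2 := by
    rw [show (2 : ℝ) = 2 * 1 by norm_num, Real.cos_two_mul]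
    nlinarith [Real.cos_one_pos]
  exact div_neg_of_neg_of_pos (neg_neg_of_pos hsin) hcos

theorem stmt6 (β₁ β₂ : ℝ) (hβ₁ : 0 < β₁) (hβ₂ : 0 < β₂)
    (hcond : nu0 * (β₁ + β₂ * nu1) ≥ Real.exp 1 - 1)
    (p : ℂ → ℂ) (hp : AnalyticOnNhd ℂ p (ball 0 1)) (hp0 : p 0 = 1)
    (hsub : ∀ z ∈ ball (0 : ℂ) 1,
      (1 + (β₁ : ℂ) * z * deriv p z + (β₂ : ℂ) * z ^ 2 * deriv (deriv p) z) ≠ 0 ∧ ‖Complex.log (1 + (β₁ : ℂ) * z * deriv p z + (β₂ : ℂ) * z ^ 2 * deriv (deriv p) z)‖ < 1) :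
    ∀ z ∈ ball (0 : ℂ) 1, ∃ w ∈ ball (0 : ℂ) 1, p z = 1 + Complex.sin w := by
  have hβ₁_large : Real.exp 1 - 1 < Real.cos 1 * β₁ := by
    rw [nu0_eq_cos_one] at hcond
    nlinarith [mul_pos hβ₂ (neg_pos.2 nu1_neg), Real.cos_one_pos]
  have hcomb := norm_add_mul_deriv_le_of_norm_log_lt hp.deriv.differentiableOn
    hp.deriv.deriv.differentiableOn hsub
  have hderiv : ∀ z ∈ ball (0 : ℂ) 1, ‖deriv p z‖ ≤ (Real.exp 1 - 1) / β₁ := fun z hz =>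
    norm_le_div_of_norm_add_mul_deriv_le ((convex_ball 0 1).starConvex (mem_ball_self one_pos))
      (fun w hw => (hp.deriv w hw).differentiableAt) hβ₁ hβ₂ hcomb hz
  intro z hz
  have hpz : ‖p z - 1‖ < 2 / π := by
    calc ‖p z - 1‖ = ‖p z - p 0‖ := by rw [hp0]
      _ ≤ (Real.exp 1 - 1) / β₁ * ‖z - 0‖ :=
        (convex_ball 0 1).norm_image_sub_le_of_norm_deriv_le
          (fun w hw => (hp w hw).differentiableAt) hderiv (mem_ball_self one_pos) hz
      _ ≤ (Real.exp 1 - 1) / β₁ := by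
        rw [sub_zero]
        have he : 0 ≤ Real.exp 1 - 1 := by linarith [Real.add_one_le_exp 1]
        exact mul_le_of_le_one_right (by positivity) (mem_ball_zero_iff.1 hz).le
      _ < Real.cos 1 := (div_lt_iff₀ hβ₁).2 (by linarith)
      _ < 2 / π := Real.cos_one_le.trans_lt
        ((lt_div_iff₀ Real.pi_pos).2 (by linarith [Real.pi_lt_d2]))
  obtain ⟨w, hw, hsin⟩ := Complex.ball_subset_sin_image_ball (mem_ball_zero_iff.2 hpz)
  exact ⟨w, hw, by rw [hsin]; ring⟩
end

section
/- Let β₁, β₂ > 0 be real numbers satisfying 2β₁ − β₂ ≥ 2√2·e. Let p be analytic on the open unit disk 𝔻 with p(0) = 1, and suppose that for every z ∈ 𝔻 the value 1 + β₁·z·p′(z) + β₂·z²·p″(z) lies in the set {1 + w·e^w : w ∈ 𝔻}. Then for every z ∈ 𝔻, p(z) ∈ {1 + log(w + (1 + w²)^{1/2}) : w ∈ 𝔻}, i.e. p(z) ≺ 1 + sinh⁻¹ z. -/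
open Metric Set Filter

/-!
Put `h w = β₁ w p'(w) + β₂ w² p''(w)`. Since `‖w eʷ‖ < e` on the disk and `h 0 = 0`, Schwarz's
lemma gives `‖h w‖ ≤ e ‖w‖`. Along a radius, `t ↦ t ^ (β₁/β₂) z p'(tz)` has derivative
`t ^ (β₁/β₂ - 2) h(tz) / β₂`, so integrating over `[0, 1]` yields `‖z p'(z)‖ ≤ (e/β₁) ‖z‖`, and
then `‖p z - 1‖ ≤ e/β₁ ≤ 1/√2` because `β₁ ≥ √2 e`. The required point is `w = sinh ζ` with
`ζ = p z - 1`: `‖sinh ζ‖ ≤ sinh ‖ζ‖ ≤ sinh (1/√2) < 1`, and as `|Im ζ| < π/2`, `cosh ζ` lies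
in the right half-plane, so with principal branches
`log (sinh ζ + (1 + sinh² ζ)^(1/2)) = log (sinh ζ + cosh ζ) = ζ`.
-/

theorem norm_sub_le_sub_of_norm_deriv_le_deriv {E : Type*} [NormedAddCommGroup E]
    [NormedSpace ℝ E] {f f' : ℝ → E} {B B' : ℝ → ℝ} {a b : ℝ} (hab : a ≤ b)
    (hf : ContinuousOn f (Icc a b)) (hB : ContinuousOn B (Icc a b))
    (hf' : ∀ t ∈ Ioo a b, HasDerivAt f (f' t) t) (hB' : ∀ t ∈ Ioo a b, HasDerivAt B (B' t) t)
    (bound : ∀ t ∈ Ioo a b, ‖f' t‖ ≤ B' t) :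
    ‖f b - f a‖ ≤ B b - B a := by
  rcases hab.eq_or_lt with rfl | hab
  · simp
  have hnear : ∀ ε ∈ Ioo a b, ‖f b - f ε‖ ≤ B b - B ε := by
    intro ε hε
    have hsub : Icc ε b ⊆ Icc a b := Icc_subset_Icc_left hε.1.le
    have hIco : ∀ t ∈ Ico ε b, t ∈ Ioo a b := fun t ht => ⟨hε.1.trans_le ht.1, ht.2⟩
    refine image_norm_le_of_norm_deriv_right_le_deriv_boundary' (f := fun t => f t - f ε)
      (B := fun t => B t - B ε) ((hf.mono hsub).sub continuousOn_const)
      (fun t ht => ((hf' t (hIco t ht)).sub_const _).hasDerivWithinAt) (by simp)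
      ((hB.mono hsub).sub continuousOn_const)
      (fun t ht => ((hB' t (hIco t ht)).sub_const _).hasDerivWithinAt)
      (fun t ht => bound t (hIco t ht)) (right_mem_Icc.2 hε.2.le)
  have hfa := (hf a (left_mem_Icc.2 hab.le)).mono_of_mem_nhdsWithin (Icc_mem_nhdsGT hab)
  have hBa := (hB a (left_mem_Icc.2 hab.le)).mono_of_mem_nhdsWithin (Icc_mem_nhdsGT hab)
  exact le_of_tendsto_of_tendsto (tendsto_const_nhds.sub hfa).norm (tendsto_const_nhds.sub hBa)
    (eventually_of_mem (Ioo_mem_nhdsGT hab) hnear)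

theorem HasDerivAt.comp_ofReal_mul {f : ℂ → ℂ} {f' z : ℂ} {t : ℝ} (hf : HasDerivAt f f' (t * z)) :
    HasDerivAt (fun s : ℝ => f (s * z)) (f' * z) t :=
  (hf.comp (t : ℂ) (hasDerivAt_mul_const z)).comp_ofReal

theorem ofReal_mul_mem_ball {z : ℂ} {R t : ℝ} (hz : z ∈ ball (0 : ℂ) R) (ht : t ∈ Icc (0 : ℝ) 1) :
    (t : ℂ) * z ∈ ball (0 : ℂ) R := by
  simpa [Complex.real_smul] using (convex_ball (0 : ℂ) R).smul_mem_of_zero_mem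
    (mem_ball_self ((norm_nonneg z).trans_lt (mem_ball_zero_iff.1 hz))) hz ht

theorem Complex.norm_cosh_le (w : ℂ) : ‖cosh w‖ ≤ Real.cosh ‖w‖ := calc
  ‖cosh w‖ ≤ (‖exp w‖ + ‖exp (-w)‖) / 2 := by
    rw [cosh, norm_div, Complex.norm_two]; gcongr; exact norm_add_le _ _
  _ = Real.cosh w.re := by rw [norm_exp, norm_exp, neg_re, Real.cosh_eq]
  _ ≤ Real.cosh ‖w‖ := Real.cosh_le_cosh.2 (by simpa using abs_re_le_norm w)

theorem Complex.norm_sinh_le (w : ℂ) : ‖sinh w‖ ≤ Real.sinh ‖w‖ := by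
  have h := norm_sub_le_sub_of_norm_deriv_le_deriv (f := fun t : ℝ => sinh (t * w))
    (B := fun t => Real.sinh (t * ‖w‖)) zero_le_one (by fun_prop) (by fun_prop)
    (fun t _ => (hasDerivAt_sinh _).comp_ofReal_mul)
    (fun t _ => (Real.hasDerivAt_sinh _).comp t (hasDerivAt_mul_const ‖w‖))
    (fun t ht => by
      rw [norm_mul]
      gcongr
      refine (norm_cosh_le _).trans_eq ?_
      rw [norm_mul, norm_real, Real.norm_of_nonneg ht.1.le])
  simpa using h

theorem Real.sinh_sqrt_two_div_two_lt_one : sinh (√2 / 2) < 1 := by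
  have hr : √2 / 2 < 3 / 4 := by nlinarith [sq_sqrt (zero_le_two : (0 : ℝ) ≤ 2), sqrt_nonneg 2]
  have hexp : exp (3 / 4) < 2.12 := by
    refine lt_of_pow_lt_pow_left₀ 4 (by norm_num) ?_
    calc exp (3 / 4) ^ 4 = exp 1 ^ 3 := by rw [← exp_nat_mul, ← exp_nat_mul]; norm_num
      _ < 2.72 ^ 3 := by gcongr; linarith [exp_one_lt_d9]
      _ < 2.12 ^ 4 := by norm_num
  have hup : exp (√2 / 2) < 2.12 := (exp_lt_exp.2 hr).trans hexp
  have hlow : 1 / 4 < exp (-(√2 / 2)) := by linarith [add_one_le_exp (-(√2 / 2))]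
  rw [sinh_eq]
  linarith

theorem Complex.cosh_re (w : ℂ) : (cosh w).re = Real.cosh w.re * Real.cos w.im := by
  conv_lhs => rw [← re_add_im w, cosh_add, cosh_mul_I, sinh_mul_I]
  simp [← ofReal_cosh, ← ofReal_cos, ← ofReal_sinh, ← ofReal_sin]

theorem Complex.log_sinh_add_sqrt_one_add_sinh_sq {w : ℂ} (hw : |w.im| < Real.pi / 2) :
    log (sinh w + (1 + sinh w ^ 2) ^ ((1 : ℂ) / 2)) = w := by
  have hre : 0 < (cosh w).re := by
    rw [cosh_re]
    exact mul_pos (Real.cosh_pos _) (Real.cos_pos_of_mem_Ioo (abs_lt.1 hw))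
  rw [add_comm 1, ← cosh_sq, one_div, sq_cpow_two_inv hre, sinh_add_cosh]
  obtain ⟨hlo, hhi⟩ := abs_lt.1 hw
  exact log_exp (by linarith [Real.pi_pos]) (by linarith [Real.pi_pos])

theorem Complex.norm_le_div_mul_norm_of_norm_le {h : ℂ → ℂ} {R M : ℝ}
    (hd : DifferentiableOn ℂ h (ball 0 R)) (h0 : h 0 = 0) (hM : ∀ w ∈ ball 0 R, ‖h w‖ ≤ M)
    {w : ℂ} (hw : w ∈ ball 0 R) : ‖h w‖ ≤ M / R * ‖w‖ := by
  simpa [h0] using dist_le_div_mul_dist_of_mapsTo_ball hd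
    (fun v hv => by simpa [h0] using hM v hv) hw

theorem Complex.norm_mul_exp_lt_exp_one {w : ℂ} (hw : w ∈ ball (0 : ℂ) 1) :
    ‖w * exp w‖ < Real.exp 1 := by
  have hw : ‖w‖ < 1 := mem_ball_zero_iff.1 hw
  rw [norm_mul, norm_exp, ← one_mul (Real.exp 1)]
  exact mul_lt_mul'' hw (Real.exp_lt_exp.2 ((re_le_norm w).trans_lt hw)) (norm_nonneg _)
    (Real.exp_pos _).le

theorem norm_mul_le_of_norm_euler_le {q : ℂ → ℂ} {R M β₁ β₂ : ℝ} (hβ₁ : 0 < β₁) (hβ₂ : 0 < β₂)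
    (hq : DifferentiableOn ℂ q (ball 0 R))
    (hM : ∀ w ∈ ball 0 R, ‖β₁ * w * q w + β₂ * w ^ 2 * deriv q w‖ ≤ M * ‖w‖)
    {z : ℂ} (hz : z ∈ ball 0 R) : ‖z * q z‖ ≤ M / β₁ * ‖z‖ := by
  set b := β₁ / β₂ with hb
  have hb0 : 0 < b := div_pos hβ₁ hβ₂
  have hmem : ∀ t ∈ Ioo (0 : ℝ) 1, (t : ℂ) * z ∈ ball 0 R :=
    fun t ht => ofReal_mul_mem_ball hz (Ioo_subset_Icc_self ht)
  have hrpow : ∀ t ∈ Ioo (0 : ℝ) 1, HasDerivAt (fun s : ℝ => s ^ b) (b * t ^ (b - 1)) t :=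
    fun t ht => Real.hasDerivAt_rpow_const (Or.inl ht.1.ne')
  have hpow : ∀ t ∈ Ioo (0 : ℝ) 1, t ^ (b - 1) = t ^ (b - 2) * t := fun t ht => by
    rw [← Real.rpow_add_one ht.1.ne']; ring_nf
  have h := norm_sub_le_sub_of_norm_deriv_le_deriv
    (f := fun t : ℝ => t ^ b • (z * q (t * z)))
    (f' := fun t => (t ^ (b - 2) / β₂) •
      (β₁ * (t * z) * q (t * z) + β₂ * (t * z) ^ 2 * deriv q (t * z)))
    (B := fun t => M / β₁ * ‖z‖ * t ^ b) (B' := fun t => M / β₁ * ‖z‖ * (b * t ^ (b - 1)))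
    zero_le_one ?_ ?_ ?_ (fun t ht => (hrpow t ht).const_mul _) ?_
  · simpa [Real.zero_rpow hb0.ne'] using h
  · refine (Real.continuous_rpow_const hb0.le).continuousOn.smul
      (continuousOn_const.mul (hq.continuousOn.comp (by fun_prop) ?_))
    exact fun t ht => ofReal_mul_mem_ball hz ht
  · exact (continuous_const.mul (Real.continuous_rpow_const hb0.le)).continuousOn
  · intro t ht
    have hqt :=
      (hq.differentiableAt (isOpen_ball.mem_nhds (hmem t ht))).hasDerivAt.comp_ofReal_mul
    refine ((hrpow t ht).smul (hqt.const_mul z)).congr_deriv ?_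
    have e1 : t ^ b = t ^ (b - 2) * t ^ 2 := by
      rw [← Real.rpow_natCast, ← Real.rpow_add ht.1]; norm_num
    have hβ₂' : (β₂ : ℂ) ≠ 0 := Complex.ofReal_ne_zero.2 hβ₂.ne'
    rw [e1, hpow t ht]
    generalize t ^ (b - 2) = c
    simp only [Complex.real_smul, hb]
    push_cast
    field_simp
    ring
  · intro t ht
    have htz : ‖(t : ℂ) * z‖ = t * ‖z‖ := by
      rw [norm_mul, Complex.norm_real, Real.norm_of_nonneg ht.1.le]
    have hc : 0 ≤ t ^ (b - 2) / β₂ := div_nonneg (Real.rpow_nonneg ht.1.le _) hβ₂.le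
    calc _ = t ^ (b - 2) / β₂ *
            ‖β₁ * (t * z) * q (t * z) + β₂ * (t * z) ^ 2 * deriv q (t * z)‖ := by
          rw [norm_smul, Real.norm_of_nonneg hc]
      _ ≤ t ^ (b - 2) / β₂ * (M * (t * ‖z‖)) :=
          mul_le_mul_of_nonneg_left (htz ▸ hM _ (hmem t ht)) hc
      _ = M / β₁ * ‖z‖ * (b * t ^ (b - 1)) := by
          rw [hpow t ht, hb]
          field_simp

theorem norm_sub_le_of_norm_mul_deriv_le {p : ℂ → ℂ} {R C : ℝ}
    (hp : DifferentiableOn ℂ p (ball 0 R)) (hC : ∀ w ∈ ball 0 R, ‖w * deriv p w‖ ≤ C * ‖w‖)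
    {z : ℂ} (hz : z ∈ ball 0 R) : ‖p z - p 0‖ ≤ C * ‖z‖ := by
  have h := norm_sub_le_sub_of_norm_deriv_le_deriv (f := fun t : ℝ => p (t * z))
    (f' := fun t => deriv p (t * z) * z) (B := fun t => C * ‖z‖ * t) (B' := fun _ => C * ‖z‖)
    zero_le_one (hp.continuousOn.comp (by fun_prop) fun t ht => ofReal_mul_mem_ball hz ht)
    (by fun_prop)
    (fun t ht => (hp.differentiableAt (isOpen_ball.mem_nhds
      (ofReal_mul_mem_ball hz (Ioo_subset_Icc_self ht)))).hasDerivAt.comp_ofReal_mul)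
    (fun t _ => by simpa using (hasDerivAt_id t).const_mul (C * ‖z‖))
    (fun t ht => by
      have h := hC _ (ofReal_mul_mem_ball hz (Ioo_subset_Icc_self ht))
      rw [norm_mul, norm_mul, Complex.norm_real, Real.norm_of_nonneg ht.1.le] at h
      rw [norm_mul]
      nlinarith [ht.1])
  simpa using h

theorem stmt13 (β₁ β₂ : ℝ) (hβ₁ : 0 < β₁) (hβ₂ : 0 < β₂)
    (hcond : (2 * β₁ - β₂) ≥ 2 * Real.sqrt 2 * Real.exp 1)
    (p : ℂ → ℂ) (hp : AnalyticOnNhd ℂ p (ball 0 1)) (hp0 : p 0 = 1)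
    (hsub : ∀ z ∈ ball (0 : ℂ) 1,
      ∃ w ∈ ball (0 : ℂ) 1, (1 + (β₁ : ℂ) * z * deriv p z + (β₂ : ℂ) * z ^ 2 * deriv (deriv p) z) = 1 + w * Complex.exp w) :
    ∀ z ∈ ball (0 : ℂ) 1, ∃ w ∈ ball (0 : ℂ) 1, p z = 1 + Complex.log (w + (1 + w ^ 2) ^ ((1 : ℂ) / 2)) := by
  have hp' : DifferentiableOn ℂ (deriv p) (ball 0 1) := hp.deriv.differentiableOn
  have hp'' : DifferentiableOn ℂ (deriv (deriv p)) (ball 0 1) := hp.deriv.deriv.differentiableOn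
  have hschwarz : ∀ w ∈ ball (0 : ℂ) 1,
      ‖β₁ * w * deriv p w + β₂ * w ^ 2 * deriv (deriv p) w‖ ≤ Real.exp 1 * ‖w‖ := fun w hw => by
    refine div_one (Real.exp 1) ▸ Complex.norm_le_div_mul_norm_of_norm_le
      (h := fun w => β₁ * w * deriv p w + β₂ * w ^ 2 * deriv (deriv p) w)
      (by fun_prop) (by simp) (fun v hv => ?_) hw
    obtain ⟨u, hu, huv⟩ := hsub v hv
    rw [add_assoc, add_right_inj] at huv
    exact huv ▸ (Complex.norm_mul_exp_lt_exp_one hu).le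
  intro z hz
  have hζ : ‖p z - 1‖ ≤ √2 / 2 := calc
    ‖p z - 1‖ ≤ Real.exp 1 / β₁ * ‖z‖ := hp0 ▸ norm_sub_le_of_norm_mul_deriv_le hp.differentiableOn
        (fun w hw => norm_mul_le_of_norm_euler_le hβ₁ hβ₂ hp' hschwarz hw) hz
    _ ≤ Real.exp 1 / β₁ := mul_le_of_le_one_right (by positivity) (mem_ball_zero_iff.1 hz).le
    _ ≤ √2 / 2 := by
      rw [div_le_div_iff₀ hβ₁ two_pos]
      nlinarith [Real.sq_sqrt (zero_le_two : (0 : ℝ) ≤ 2), Real.sqrt_nonneg 2, Real.exp_pos 1]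
  have hζ' : √2 / 2 < Real.pi / 2 := by
    nlinarith [Real.sq_sqrt (zero_le_two : (0 : ℝ) ≤ 2), Real.sqrt_nonneg 2, Real.pi_gt_three]
  refine ⟨Complex.sinh (p z - 1), mem_ball_zero_iff.2 ?_, ?_⟩
  · exact (Complex.norm_sinh_le _).trans_lt
      ((Real.sinh_le_sinh.2 hζ).trans_lt Real.sinh_sqrt_two_div_two_lt_one)
  · rw [Complex.log_sinh_add_sqrt_one_add_sinh_sq
      (((Complex.abs_im_le_norm _).trans hζ).trans_lt hζ')]
    ring
end
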